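/- arXiv:2308.03541 — 14 statements merged into one kernel-verified Lean document; each statement's English description precedes it below -/
import Mathlib

section
/- The function C(u1,u2) = u1*u2 + (θ/(κ1*κ2*π²))·sin(κ1·π·u1)·sin(κ2·π·u2) on [0,1]² satisfies the copula conditions (boundary conditions and 2-increasingness) if and only if -1 ≤ θ ≤ 1. -/
noncomputable def NM (κ1 κ2 : ℕ) (θ u1 u2 : ℝ) : ℝ :=
  u1 * u2 + θ / (κ1 * κ2 * Real.pi ^ 2) * Real.sin (κ1 * Real.pi * u1) * Real.sin (κ2 * Real.pi * u2)

/-!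
The rectangle volume of `NM` is `Δu₁ Δu₂ + θ/(κ₁κ₂π²) · Δsin(κ₁πu₁) · Δsin(κ₂πu₂)`. As `sin` is
1-Lipschitz, the second term is at most `|θ| Δu₁ Δu₂` in absolute value, so `|θ| ≤ 1` suffices.
Conversely, since `sin x ~ x`, a small square with corner at the origin has volume
`≈ (1 + θ) Δu₁ Δu₂`, and one with corner `(1/κ₁, 0)` (where `cos(κ₁πu₁) = -1`) has volume
`≈ (1 - θ) Δu₁ Δu₂`; one of them is negative when `|θ| > 1`.
-/

open Real Set Filter Topology

def IsTwoIncreasing (C : ℝ → ℝ → ℝ) : Prop :=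
  ∀ u1L ∈ Icc (0:ℝ) 1, ∀ u1H ∈ Icc (0:ℝ) 1, ∀ u2L ∈ Icc (0:ℝ) 1, ∀ u2H ∈ Icc (0:ℝ) 1,
    u1L ≤ u1H → u2L ≤ u2H → 0 ≤ C u1H u2H - C u1L u2H - C u1H u2L + C u1L u2L

lemma exists_sq_lt_mul_sin_sq {θ : ℝ} (hθ : 1 < θ) : ∃ x ∈ Ioo (0:ℝ) 1, x ^ 2 < θ * sin x ^ 2 := by
  have hsinc : ∀ᶠ x in 𝓝[>] 0, 1 < θ * sinc x ^ 2 := by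
    refine nhdsWithin_le_nhds (Tendsto.eventually_const_lt hθ ?_)
    simpa using ((continuous_sinc.pow 2).const_mul θ).tendsto 0
  obtain ⟨x, hx1, hx⟩ := (hsinc.and (Ioo_mem_nhdsGT one_pos)).exists
  refine ⟨x, hx, ?_⟩
  have hsin : sin x = x * sinc x := by
    rw [sinc_of_ne_zero hx.1.ne', mul_div_cancel₀ _ hx.1.ne']
  rw [hsin]
  nlinarith [pow_pos hx.1 2]

lemma abs_sin_mul_sub_sin_mul_le {k a b : ℝ} (hk : 0 ≤ k) (hab : a ≤ b) :
    |sin (k * b) - sin (k * a)| ≤ k * (b - a) := by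
  calc |sin (k * b) - sin (k * a)| ≤ |k * b - k * a| := abs_sin_sub_sin_le _ _
    _ = k * (b - a) := by rw [← mul_sub, abs_of_nonneg (mul_nonneg hk (sub_nonneg.2 hab))]

lemma div_nat_mul_pi_mem_Icc {κ : ℕ} (hκ : 1 ≤ κ) {t : ℝ} (h0 : 0 ≤ t) (hπ : t ≤ π) :
    t / (κ * π) ∈ Icc (0:ℝ) 1 := by
  have hκ' : (1:ℝ) ≤ κ := by exact_mod_cast hκ
  refine ⟨by positivity, (div_le_one (by positivity)).2 ?_⟩
  nlinarith [pi_pos]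

namespace NM

variable {κ1 κ2 : ℕ} {θ : ℝ}

@[simp] lemma zero_right (u : ℝ) : NM κ1 κ2 θ u 0 = 0 := by simp [NM]
@[simp] lemma zero_left (u : ℝ) : NM κ1 κ2 θ 0 u = 0 := by simp [NM]
@[simp] lemma one_right (u : ℝ) : NM κ1 κ2 θ u 1 = u := by simp [NM, sin_nat_mul_pi]
@[simp] lemma one_left (u : ℝ) : NM κ1 κ2 θ 1 u = u := by simp [NM, sin_nat_mul_pi]

lemma volume_eq (a b c d : ℝ) :
    NM κ1 κ2 θ b d - NM κ1 κ2 θ a d - NM κ1 κ2 θ b c + NM κ1 κ2 θ a c =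
      (b - a) * (d - c) + θ / (κ1 * κ2 * π ^ 2) *
        ((sin (κ1 * π * b) - sin (κ1 * π * a)) * (sin (κ2 * π * d) - sin (κ2 * π * c))) := by
  unfold NM; ring

lemma isTwoIncreasing (hθ : |θ| ≤ 1) : IsTwoIncreasing (NM κ1 κ2 θ) := by
  intro a _ b _ c _ d _ hab hcd
  set K : ℝ := κ1 * κ2 * π ^ 2
  have hsin := mul_le_mul (abs_sin_mul_sub_sin_mul_le (k := κ1 * π) (by positivity) hab)
    (abs_sin_mul_sub_sin_mul_le (k := κ2 * π) (by positivity) hcd)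
    (abs_nonneg _) (by positivity)
  have hpert : |θ / K * ((sin (κ1 * π * b) - sin (κ1 * π * a)) *
      (sin (κ2 * π * d) - sin (κ2 * π * c)))| ≤ (b - a) * (d - c) :=
    calc _ = |θ| * (|sin (κ1 * π * b) - sin (κ1 * π * a)| *
          |sin (κ2 * π * d) - sin (κ2 * π * c)|) / K := by
          rw [abs_mul, abs_mul, abs_div, abs_of_nonneg (by positivity : 0 ≤ K)]; ring
      _ ≤ 1 * (κ1 * π * (b - a) * (κ2 * π * (d - c))) / K := by gcongr
      _ = K / K * ((b - a) * (d - c)) := by ring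
      _ ≤ 1 * ((b - a) * (d - c)) := by gcongr; exact div_self_le_one K
      _ = (b - a) * (d - c) := one_mul _
  rw [volume_eq]
  linarith [neg_abs_le (θ / K * ((sin (κ1 * π * b) - sin (κ1 * π * a)) *
      (sin (κ2 * π * d) - sin (κ2 * π * c))))]

lemma volume_div_mul_pi_eq (hκ1 : κ1 ≠ 0) (hκ2 : κ2 ≠ 0) (s t y : ℝ) :
    NM κ1 κ2 θ (t / (κ1 * π)) (y / (κ2 * π)) - NM κ1 κ2 θ (s / (κ1 * π)) (y / (κ2 * π))
      - NM κ1 κ2 θ (t / (κ1 * π)) 0 + NM κ1 κ2 θ (s / (κ1 * π)) 0 =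
      ((t - s) * y + θ * ((sin t - sin s) * sin y)) / (κ1 * κ2 * π ^ 2) := by
  have h1 : (κ1 * π : ℝ) ≠ 0 := by positivity
  have h2 : (κ2 * π : ℝ) ≠ 0 := by positivity
  rw [volume_eq, mul_div_cancel₀ t h1, mul_div_cancel₀ s h1, mul_div_cancel₀ y h2,
    mul_zero, sin_zero]
  field_simp
  ring

lemma neg_one_le_of_isTwoIncreasing (hκ1 : 1 ≤ κ1) (hκ2 : 1 ≤ κ2)
    (h : IsTwoIncreasing (NM κ1 κ2 θ)) : -1 ≤ θ := by
  by_contra! hθ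
  obtain ⟨x, hx, hsin⟩ := exists_sq_lt_mul_sin_sq (lt_neg_of_lt_neg hθ)
  have hxπ : x ≤ π := by linarith [hx.2, pi_gt_three]
  have hvol := h _ (div_nat_mul_pi_mem_Icc hκ1 le_rfl pi_pos.le) _
    (div_nat_mul_pi_mem_Icc hκ1 hx.1.le hxπ) 0 ⟨le_rfl, zero_le_one⟩ _
    (div_nat_mul_pi_mem_Icc hκ2 hx.1.le hxπ) (by gcongr; exact hx.1.le)
    (div_nonneg hx.1.le (by positivity))
  rw [volume_div_mul_pi_eq (by omega) (by omega), sin_zero] at hvol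
  exact hvol.not_gt (div_neg_of_neg_of_pos (by nlinarith) (by positivity))

lemma le_one_of_isTwoIncreasing (hκ1 : 1 ≤ κ1) (hκ2 : 1 ≤ κ2)
    (h : IsTwoIncreasing (NM κ1 κ2 θ)) : θ ≤ 1 := by
  by_contra! hθ
  obtain ⟨x, hx, hsin⟩ := exists_sq_lt_mul_sin_sq hθ
  have hxπ : x ≤ π := by linarith [hx.2, pi_gt_three]
  have hvol := h _ (div_nat_mul_pi_mem_Icc hκ1 (sub_nonneg.2 hxπ) (sub_le_self _ hx.1.le)) _
    (div_nat_mul_pi_mem_Icc hκ1 pi_pos.le le_rfl) 0 ⟨le_rfl, zero_le_one⟩ _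
    (div_nat_mul_pi_mem_Icc hκ2 hx.1.le hxπ) (by gcongr; linarith [hx.1])
    (div_nonneg hx.1.le (by positivity))
  rw [volume_div_mul_pi_eq (by omega) (by omega), sin_pi, sin_pi_sub] at hvol
  exact hvol.not_gt (div_neg_of_neg_of_pos (by nlinarith) (by positivity))

end NM

theorem stmt_0 (κ1 κ2 : ℕ) (hκ1 : 1 ≤ κ1) (hκ2 : 1 ≤ κ2) (θ : ℝ) :
    ((∀ u ∈ Set.Icc (0:ℝ) 1,
        NM κ1 κ2 θ u 0 = 0 ∧ NM κ1 κ2 θ 0 u = 0 ∧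
        NM κ1 κ2 θ u 1 = u ∧ NM κ1 κ2 θ 1 u = u) ∧
      (∀ u1L ∈ Set.Icc (0:ℝ) 1, ∀ u1H ∈ Set.Icc (0:ℝ) 1,
       ∀ u2L ∈ Set.Icc (0:ℝ) 1, ∀ u2H ∈ Set.Icc (0:ℝ) 1,
        u1L ≤ u1H → u2L ≤ u2H →
        0 ≤ NM κ1 κ2 θ u1H u2H - NM κ1 κ2 θ u1L u2H
            - NM κ1 κ2 θ u1H u2L + NM κ1 κ2 θ u1L u2L))
    ↔ (-1 ≤ θ ∧ θ ≤ 1) := by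
  constructor
  · rintro ⟨-, h⟩
    exact ⟨NM.neg_one_le_of_isTwoIncreasing hκ1 hκ2 h, NM.le_one_of_isTwoIncreasing hκ1 hκ2 h⟩
  · intro hθ
    exact ⟨fun u _ => by simp, NM.isTwoIncreasing (abs_le.2 hθ)⟩
end

section
/- The multivariate function C(u) = ∏_{d=1}^D u_d + θ·∏_{d=1}^D (1/(κ_d·π))·sin(κ_d·π·u_d) on [0,1]^D satisfies the multivariate copula conditions (multivariate boundary conditions and nonnegativity of the D-fold mixed partial derivative) if and only if -1 ≤ θ ≤ 1. -/
noncomputable def NMmulti (D : ℕ) (κ : Fin D → ℕ) (θ : ℝ) (u : Fin D → ℝ) : ℝ :=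
  (∏ d, u d) + θ * ∏ d, (1 / (κ d * Real.pi) * Real.sin (κ d * Real.pi * u d))

theorem stmt_2 (D : ℕ) (hD : 2 ≤ D) (κ : Fin D → ℕ) (hκ : ∀ d, 1 ≤ κ d) (θ : ℝ) :
    ((∀ u : Fin D → ℝ, (∀ d, u d ∈ Set.Icc (0:ℝ) 1) →
        (∃ d, u d = 0) → NMmulti D κ θ u = 0) ∧
     (∀ u : Fin D → ℝ, (∀ d, u d ∈ Set.Icc (0:ℝ) 1) →
        ∀ d : Fin D, (∀ e : Fin D, e ≠ d → u e = 1) → NMmulti D κ θ u = u d) ∧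
     (∀ u : Fin D → ℝ, (∀ d, u d ∈ Set.Icc (0:ℝ) 1) →
        0 ≤ 1 + θ * ∏ d, Real.cos (κ d * Real.pi * u d)))
    ↔ (-1 ≤ θ ∧ θ ≤ 1) := by
  constructor
  · rintro ⟨-, -, h3⟩
    constructor
    · have h := h3 (fun _ => 0) (fun d => ⟨le_refl 0, zero_le_one⟩)
      simp at h
      linarith
    · set i : Fin D := ⟨0, by omega⟩ with hi
      have hκ0 : (0:ℝ) < κ i := by
        exact_mod_cast Nat.lt_of_lt_of_le Nat.zero_lt_one (hκ i)
      have h := h3 (fun d => if d = i then 1/(κ i : ℝ) else 0) ?_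
      · have hp : (∏ d, Real.cos ((κ d : ℝ) * Real.pi *
            (if d = i then 1/(κ i : ℝ) else 0))) = -1 := by
          rw [Finset.prod_eq_single i]
          · simp only [if_pos rfl, if_true]
            have : (κ i : ℝ) * Real.pi * (1/(κ i : ℝ)) = Real.pi := by
              field_simp
            rw [this, Real.cos_pi]
          · intro b _ hb
            simp [hb]
          · simp
        rw [hp] at h
        linarith
      · intro d
        by_cases hd : d = i
        · simp only [hd, if_pos rfl, if_true]
          constructor
          · positivity
          · rw [div_le_one hκ0]
            exact_mod_cast hκ i
        · simp [hd]
  · rintro ⟨h1, h2⟩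
    refine ⟨?_, ?_, ?_⟩
    · rintro u hu ⟨d, hd⟩
      unfold NMmulti
      have e1 : (∏ e, u e) = 0 := Finset.prod_eq_zero (Finset.mem_univ d) hd
      have e2 : (∏ e, (1 / ((κ e : ℝ) * Real.pi) * Real.sin ((κ e : ℝ) * Real.pi * u e))) = 0 := by
        apply Finset.prod_eq_zero (Finset.mem_univ d)
        simp [hd]
      rw [e1, e2, mul_zero, add_zero]
    · intro u hu d hd
      unfold NMmulti
      have e1 : (∏ e, u e) = u d := by
        apply Finset.prod_eq_single
        · intro b _ hb; exact hd b hb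
        · simp
      obtain ⟨e, he⟩ : ∃ e : Fin D, e ≠ d := by
        rcases Decidable.eq_or_ne (⟨0, by omega⟩ : Fin D) d with h | h
        · exact ⟨⟨1, by omega⟩, by rw [← h]; simp [Fin.ext_iff]⟩
        · exact ⟨_, h⟩
      have e2 : (∏ e, (1 / ((κ e : ℝ) * Real.pi) * Real.sin ((κ e : ℝ) * Real.pi * u e))) = 0 := by
        apply Finset.prod_eq_zero (Finset.mem_univ e)
        rw [hd e he, mul_one, Real.sin_nat_mul_pi, mul_zero]
      rw [e1, e2, mul_zero, add_zero]
    · intro u hu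
      have hb : |θ * ∏ d, Real.cos ((κ d : ℝ) * Real.pi * u d)| ≤ 1 := by
        rw [abs_mul]
        have hθ : |θ| ≤ 1 := abs_le.mpr ⟨h1, h2⟩
        have hp : |∏ d, Real.cos ((κ d : ℝ) * Real.pi * u d)| ≤ 1 := by
          rw [Finset.abs_prod]
          apply Finset.prod_le_one
          · intro i _; positivity
          · intro i _; exact Real.abs_cos_le_one _
        calc |θ| * |∏ d, Real.cos ((κ d : ℝ) * Real.pi * u d)| ≤ 1 * 1 :=
              mul_le_mul hθ hp (abs_nonneg _) zero_le_one
          _ = 1 := one_mul 1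
      have := neg_abs_le (θ * ∏ d, Real.cos ((κ d : ℝ) * Real.pi * u d))
      linarith
end

section
/- The normal mode copula C_NM with amplitude θ ≠ 0 and mode numbers κ1, κ2 is symmetric (i.e., C_NM(u1,u2) = C_NM(u2,u1) for all u1,u2 ∈ [0,1]) if and only if κ1 = κ2. -/
lemma dvd_of_key (κ1 κ2 : ℕ) (hκ1 : 1 ≤ κ1) (hκ2 : 1 ≤ κ2)
    (key : ∀ u1 ∈ Set.Icc (0:ℝ) 1, ∀ u2 ∈ Set.Icc (0:ℝ) 1,
      Real.sin (κ1 * Real.pi * u1) * Real.sin (κ2 * Real.pi * u2)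
        = Real.sin (κ1 * Real.pi * u2) * Real.sin (κ2 * Real.pi * u1)) :
    κ1 ∣ κ2 := by
  have hk1 : (0:ℝ) < κ1 := by exact_mod_cast hκ1
  have hk1' : (κ1:ℝ) ≠ 0 := ne_of_gt hk1
  have hm1 : (1/(2*(κ1:ℝ))) ∈ Set.Icc (0:ℝ) 1 := by
    constructor
    · positivity
    · rw [div_le_one (by positivity)]
      have : (1:ℝ) ≤ κ1 := by exact_mod_cast hκ1
      linarith
  have hm2 : (1/(κ1:ℝ)) ∈ Set.Icc (0:ℝ) 1 := by
    constructor
    · positivity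
    · rw [div_le_one hk1]
      exact_mod_cast hκ1
  have h := key (1/(2*(κ1:ℝ))) hm1 (1/(κ1:ℝ)) hm2
  have e1 : (κ1:ℝ) * Real.pi * (1/(2*(κ1:ℝ))) = Real.pi/2 := by field_simp
  have e2 : (κ1:ℝ) * Real.pi * (1/(κ1:ℝ)) = Real.pi := by field_simp
  rw [e1, e2, Real.sin_pi_div_two, Real.sin_pi, one_mul, zero_mul] at h
  obtain ⟨n, hn⟩ := Real.sin_eq_zero_iff.mp h
  have hn' : (n:ℝ) * κ1 = κ2 := by
    have hpi : Real.pi ≠ 0 := Real.pi_ne_zero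
    field_simp at hn
    nlinarith [Real.pi_pos]
  have hk2 : (0:ℝ) < κ2 := by exact_mod_cast hκ2
  have hnpos : 0 < n := by
    by_contra hneg
    push_neg at hneg
    have : (n:ℝ) ≤ 0 := by exact_mod_cast hneg
    nlinarith
  lift n to ℕ using le_of_lt hnpos with m
  refine ⟨m, ?_⟩
  have : ((κ1 * m : ℕ):ℝ) = (κ2:ℝ) := by push_cast; push_cast at hn'; linarith
  exact_mod_cast this.symm

theorem stmt_3 (κ1 κ2 : ℕ) (hκ1 : 1 ≤ κ1) (hκ2 : 1 ≤ κ2) (θ : ℝ)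
    (hθ : -1 ≤ θ ∧ θ ≤ 1) (hθ0 : θ ≠ 0) :
    (∀ u1 ∈ Set.Icc (0:ℝ) 1, ∀ u2 ∈ Set.Icc (0:ℝ) 1,
      NM κ1 κ2 θ u1 u2 = NM κ1 κ2 θ u2 u1) ↔ κ1 = κ2 := by
  constructor
  · intro h
    have hk1 : (0:ℝ) < κ1 := by exact_mod_cast hκ1
    have hk2 : (0:ℝ) < κ2 := by exact_mod_cast hκ2
    have hc : θ / (κ1 * κ2 * Real.pi ^ 2) ≠ 0 := by
      apply div_ne_zero hθ0
      positivity
    have key : ∀ u1 ∈ Set.Icc (0:ℝ) 1, ∀ u2 ∈ Set.Icc (0:ℝ) 1,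
        Real.sin (κ1 * Real.pi * u1) * Real.sin (κ2 * Real.pi * u2)
          = Real.sin (κ1 * Real.pi * u2) * Real.sin (κ2 * Real.pi * u1) := by
      intro u1 h1 u2 h2
      have hh := h u1 h1 u2 h2
      unfold NM at hh
      have : θ / (κ1 * κ2 * Real.pi ^ 2) *
          (Real.sin (κ1 * Real.pi * u1) * Real.sin (κ2 * Real.pi * u2)
            - Real.sin (κ1 * Real.pi * u2) * Real.sin (κ2 * Real.pi * u1)) = 0 := by
        nlinarith [hh]
      have := (mul_eq_zero.mp this).resolve_left hc
      linarith
    have key' : ∀ u1 ∈ Set.Icc (0:ℝ) 1, ∀ u2 ∈ Set.Icc (0:ℝ) 1,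
        Real.sin (κ2 * Real.pi * u1) * Real.sin (κ1 * Real.pi * u2)
          = Real.sin (κ2 * Real.pi * u2) * Real.sin (κ1 * Real.pi * u1) := by
      intro u1 h1 u2 h2
      have := key u1 h1 u2 h2
      linarith [key u1 h1 u2 h2]
    exact Nat.dvd_antisymm (dvd_of_key κ1 κ2 hκ1 hκ2 key) (dvd_of_key κ2 κ1 hκ2 hκ1 key')
  · rintro rfl
    intro u1 _ u2 _
    unfold NM
    ring
end

section
/- For the normal mode copula, the associated copula C̄⁽¹⁾(u1,u2) = u2 - C_NM(1-u1, u2 | θ) equals C_NM(u1,u2 | θ) if κ1 is even, and equals C_NM(u1,u2 | -θ) if κ1 is odd. -/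
theorem stmt_4 (κ1 κ2 : ℕ) (hκ1 : 1 ≤ κ1) (hκ2 : 1 ≤ κ2) (θ : ℝ)
    (hθ : -1 ≤ θ ∧ θ ≤ 1) :
    ∀ u1 ∈ Set.Icc (0:ℝ) 1, ∀ u2 ∈ Set.Icc (0:ℝ) 1,
      (Even κ1 → u2 - NM κ1 κ2 θ (1 - u1) u2 = NM κ1 κ2 θ u1 u2) ∧
      (Odd κ1 → u2 - NM κ1 κ2 θ (1 - u1) u2 = NM κ1 κ2 (-θ) u1 u2) := by
  intro u1 _ u2 _
  have key : (κ1:ℝ) * Real.pi * (1 - u1) = κ1 * Real.pi - κ1 * Real.pi * u1 := by ring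
  constructor
  · intro h
    simp only [NM, key, Real.sin_nat_mul_pi_sub, h.neg_one_pow]
    ring
  · intro h
    simp only [NM, key, Real.sin_nat_mul_pi_sub, h.neg_one_pow]
    ring
end

section
/- For the normal mode copula, the survival copula C̄⁽¹²⁾(u1,u2) = u1 + u2 - 1 + C_NM(1-u1, 1-u2 | θ) equals C_NM(u1,u2 | θ) if κ1 + κ2 is even, and equals C_NM(u1,u2 | -θ) if κ1 + κ2 is odd. -/
lemma sin_flip (κ : ℕ) (u : ℝ) :
    Real.sin (κ * Real.pi * (1 - u)) = -((-1:ℝ)^κ) * Real.sin (κ * Real.pi * u) := by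
  have : (κ : ℝ) * Real.pi * (1 - u) = κ * Real.pi - κ * Real.pi * u := by ring
  rw [this, Real.sin_nat_mul_pi_sub]
  ring

theorem stmt_5 (κ1 κ2 : ℕ) (hκ1 : 1 ≤ κ1) (hκ2 : 1 ≤ κ2) (θ : ℝ)
    (hθ : -1 ≤ θ ∧ θ ≤ 1) :
    ∀ u1 ∈ Set.Icc (0:ℝ) 1, ∀ u2 ∈ Set.Icc (0:ℝ) 1,
      (Even (κ1 + κ2) →
        u1 + u2 - 1 + NM κ1 κ2 θ (1 - u1) (1 - u2) = NM κ1 κ2 θ u1 u2) ∧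
      (Odd (κ1 + κ2) →
        u1 + u2 - 1 + NM κ1 κ2 θ (1 - u1) (1 - u2) = NM κ1 κ2 (-θ) u1 u2) := by
  intro u1 _ u2 _
  constructor
  · intro he
    have h : ((-1:ℝ))^(κ1+κ2) = 1 := he.neg_one_pow
    rw [pow_add] at h
    unfold NM
    rw [sin_flip, sin_flip]
    linear_combination (θ / (κ1 * κ2 * Real.pi ^ 2) * Real.sin (κ1 * Real.pi * u1) * Real.sin (κ2 * Real.pi * u2)) * h
  · intro ho
    have h : ((-1:ℝ))^(κ1+κ2) = -1 := ho.neg_one_pow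
    rw [pow_add] at h
    unfold NM
    rw [sin_flip, sin_flip]
    linear_combination (θ / (κ1 * κ2 * Real.pi ^ 2) * Real.sin (κ1 * Real.pi * u1) * Real.sin (κ2 * Real.pi * u2)) * h
end

section
/- The normal mode copula C_NM satisfies C_NM(u1,u2) ≥ u1·u2 for all u1,u2 ∈ [0,1] (positive quadrant dependence) if and only if (κ1 = κ2 = 1 and θ ≥ 0) or θ = 0. -/
theorem stmt_6 (κ1 κ2 : ℕ) (hκ1 : 1 ≤ κ1) (hκ2 : 1 ≤ κ2) (θ : ℝ)
    (hθ : -1 ≤ θ ∧ θ ≤ 1) :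
    (∀ u1 ∈ Set.Icc (0:ℝ) 1, ∀ u2 ∈ Set.Icc (0:ℝ) 1,
      u1 * u2 ≤ NM κ1 κ2 θ u1 u2)
    ↔ ((κ1 = 1 ∧ κ2 = 1 ∧ 0 ≤ θ) ∨ θ = 0) := by
  have hπ := Real.pi_pos
  have hk1 : (0:ℝ) < κ1 := by exact_mod_cast Nat.pos_of_ne_zero (by omega)
  have hk2 : (0:ℝ) < κ2 := by exact_mod_cast Nat.pos_of_ne_zero (by omega)
  have hD : (0:ℝ) < (κ1:ℝ) * κ2 * Real.pi ^ 2 := by positivity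
  have hk1' : (1:ℝ) ≤ κ1 := by exact_mod_cast hκ1
  have hk2' : (1:ℝ) ≤ κ2 := by exact_mod_cast hκ2
  constructor
  · intro h
    by_cases hθ0 : θ = 0
    · exact Or.inr hθ0
    left
    have key : ∀ u1 ∈ Set.Icc (0:ℝ) 1, ∀ u2 ∈ Set.Icc (0:ℝ) 1,
        0 ≤ θ * Real.sin (κ1 * Real.pi * u1) * Real.sin (κ2 * Real.pi * u2) := by
      intro u1 h1 u2 h2
      have h' := h u1 h1 u2 h2
      unfold NM at h'
      have h2' : 0 ≤ θ / ((κ1:ℝ) * κ2 * Real.pi ^ 2) * Real.sin (κ1 * Real.pi * u1) *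
          Real.sin (κ2 * Real.pi * u2) := by linarith
      have := mul_nonneg h2' hD.le
      have e : θ / ((κ1:ℝ) * κ2 * Real.pi ^ 2) * Real.sin (κ1 * Real.pi * u1) *
          Real.sin (κ2 * Real.pi * u2) * ((κ1:ℝ) * κ2 * Real.pi ^ 2)
          = θ * Real.sin (κ1 * Real.pi * u1) * Real.sin (κ2 * Real.pi * u2) := by
        field_simp
      rwa [e] at this
    have mem1 : (1 / (2 * (κ1:ℝ))) ∈ Set.Icc (0:ℝ) 1 := by
      constructor
      · positivity
      · rw [div_le_one (by positivity)]; linarith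
    have mem2 : (1 / (2 * (κ2:ℝ))) ∈ Set.Icc (0:ℝ) 1 := by
      constructor
      · positivity
      · rw [div_le_one (by positivity)]; linarith
    have s1 : Real.sin ((κ1:ℝ) * Real.pi * (1 / (2 * (κ1:ℝ)))) = 1 := by
      have : (κ1:ℝ) * Real.pi * (1 / (2 * (κ1:ℝ))) = Real.pi / 2 := by
        field_simp
      rw [this, Real.sin_pi_div_two]
    have s2 : Real.sin ((κ2:ℝ) * Real.pi * (1 / (2 * (κ2:ℝ)))) = 1 := by
      have : (κ2:ℝ) * Real.pi * (1 / (2 * (κ2:ℝ))) = Real.pi / 2 := by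
        field_simp
      rw [this, Real.sin_pi_div_two]
    have hθnn : 0 ≤ θ := by
      have := key _ mem1 _ mem2
      rw [s1, s2] at this; linarith
    have s3pi2 : Real.sin (3 * Real.pi / 2) = -1 := by
      have : (3:ℝ) * Real.pi / 2 = Real.pi + Real.pi / 2 := by ring
      rw [this, Real.sin_add, Real.sin_pi, Real.cos_pi, Real.sin_pi_div_two]
      ring
    have hκ1eq : κ1 = 1 := by
      by_contra hne
      have hκ1ge : 2 ≤ κ1 := by omega
      have hk1ge : (2:ℝ) ≤ (κ1:ℝ) := by exact_mod_cast hκ1ge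
      have mem3 : (3 / (2 * (κ1:ℝ))) ∈ Set.Icc (0:ℝ) 1 := by
        constructor
        · positivity
        · rw [div_le_one (by positivity)]; linarith
      have s3 : Real.sin ((κ1:ℝ) * Real.pi * (3 / (2 * (κ1:ℝ)))) = -1 := by
        have : (κ1:ℝ) * Real.pi * (3 / (2 * (κ1:ℝ))) = 3 * Real.pi / 2 := by
          field_simp
        rw [this, s3pi2]
      have := key _ mem3 _ mem2
      rw [s3, s2] at this
      have : θ ≤ 0 := by linarith
      exact hθ0 (le_antisymm this hθnn)
    have hκ2eq : κ2 = 1 := by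
      by_contra hne
      have hκ2ge : 2 ≤ κ2 := by omega
      have hk2ge : (2:ℝ) ≤ (κ2:ℝ) := by exact_mod_cast hκ2ge
      have mem3 : (3 / (2 * (κ2:ℝ))) ∈ Set.Icc (0:ℝ) 1 := by
        constructor
        · positivity
        · rw [div_le_one (by positivity)]; linarith
      have s3 : Real.sin ((κ2:ℝ) * Real.pi * (3 / (2 * (κ2:ℝ)))) = -1 := by
        have : (κ2:ℝ) * Real.pi * (3 / (2 * (κ2:ℝ))) = 3 * Real.pi / 2 := by
          field_simp
        rw [this, s3pi2]
      have := key _ mem1 _ mem3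
      rw [s1, s3] at this
      have : θ ≤ 0 := by linarith
      exact hθ0 (le_antisymm this hθnn)
    exact ⟨hκ1eq, hκ2eq, hθnn⟩
  · rintro (⟨h1, h2, hθnn⟩ | hθ0)
    · subst h1; subst h2
      intro u1 hu1 u2 hu2
      unfold NM
      have hs1 : 0 ≤ Real.sin ((1:ℕ) * Real.pi * u1) := by
        push_cast
        rw [one_mul]
        apply Real.sin_nonneg_of_nonneg_of_le_pi
        · exact mul_nonneg hπ.le hu1.1
        · nlinarith [hu1.2]
      have hs2 : 0 ≤ Real.sin ((1:ℕ) * Real.pi * u2) := by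
        push_cast
        rw [one_mul]
        apply Real.sin_nonneg_of_nonneg_of_le_pi
        · exact mul_nonneg hπ.le hu2.1
        · nlinarith [hu2.2]
      have : 0 ≤ θ / ((1:ℕ) * (1:ℕ) * Real.pi ^ 2) * Real.sin ((1:ℕ) * Real.pi * u1) *
          Real.sin ((1:ℕ) * Real.pi * u2) := by
        apply mul_nonneg (mul_nonneg _ hs1) hs2
        apply div_nonneg hθnn
        push_cast
        positivity
      push_cast at this ⊢
      linarith
    · subst hθ0
      intro u1 _ u2 _
      simp [NM]
end

section
/- The normal mode copula C_NM satisfies C_NM(u1,u2) ≤ u1·u2 for all u1,u2 ∈ [0,1] (negative quadrant dependence) if and only if (κ1 = κ2 = 1 and θ ≤ 0) or θ = 0. -/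
lemma nm_key (κ1 κ2 : ℕ) (hκ1 : 1 ≤ κ1) (hκ2 : 1 ≤ κ2) (θ u1 u2 : ℝ) :
    NM κ1 κ2 θ u1 u2 ≤ u1 * u2 ↔
      θ * Real.sin (κ1 * Real.pi * u1) * Real.sin (κ2 * Real.pi * u2) ≤ 0 := by
  have h1 : (0:ℝ) < κ1 := by exact_mod_cast hκ1
  have h2 : (0:ℝ) < κ2 := by exact_mod_cast hκ2
  have hc : (0:ℝ) < κ1 * κ2 * Real.pi ^ 2 := by positivity
  unfold NM
  rw [add_le_iff_nonpos_right, div_mul_eq_mul_div, div_mul_eq_mul_div, div_nonpos_iff]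
  constructor
  · rintro (⟨h, hb⟩ | ⟨h, _⟩)
    · linarith
    · exact h
  · intro h; right; exact ⟨h, hc.le⟩

lemma sin_half (κ : ℕ) (hκ : 1 ≤ κ) :
    Real.sin ((κ:ℝ) * Real.pi * (1 / (2 * κ))) = 1 := by
  have h : (κ:ℝ) ≠ 0 := by positivity
  have : (κ:ℝ) * Real.pi * (1 / (2 * κ)) = Real.pi / 2 := by field_simp
  rw [this, Real.sin_pi_div_two]

lemma sin_threehalf (κ : ℕ) (hκ : 1 ≤ κ) :
    Real.sin ((κ:ℝ) * Real.pi * (3 / (2 * κ))) = -1 := by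
  have h : (κ:ℝ) ≠ 0 := by positivity
  have : (κ:ℝ) * Real.pi * (3 / (2 * κ)) = Real.pi / 2 + Real.pi := by field_simp; ring
  rw [this, Real.sin_add_pi, Real.sin_pi_div_two]

lemma mem_half (κ : ℕ) (hκ : 1 ≤ κ) : (1 / (2 * (κ:ℝ))) ∈ Set.Icc (0:ℝ) 1 := by
  have h1 : (1:ℝ) ≤ κ := by exact_mod_cast hκ
  constructor
  · positivity
  · rw [div_le_one (by linarith)]; linarith

lemma mem_threehalf (κ : ℕ) (hκ : 2 ≤ κ) : (3 / (2 * (κ:ℝ))) ∈ Set.Icc (0:ℝ) 1 := by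
  have h1 : (2:ℝ) ≤ κ := by exact_mod_cast hκ
  constructor
  · positivity
  · rw [div_le_one (by linarith)]; linarith

theorem stmt_7 (κ1 κ2 : ℕ) (hκ1 : 1 ≤ κ1) (hκ2 : 1 ≤ κ2) (θ : ℝ)
    (hθ : -1 ≤ θ ∧ θ ≤ 1) :
    (∀ u1 ∈ Set.Icc (0:ℝ) 1, ∀ u2 ∈ Set.Icc (0:ℝ) 1,
      NM κ1 κ2 θ u1 u2 ≤ u1 * u2)
    ↔ ((κ1 = 1 ∧ κ2 = 1 ∧ θ ≤ 0) ∨ θ = 0) := by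
  constructor
  · intro h
    by_cases hk1 : κ1 = 1
    · by_cases hk2 : κ2 = 1
      · left
        refine ⟨hk1, hk2, ?_⟩
        have := (nm_key κ1 κ2 hκ1 hκ2 θ _ _).mp
          (h _ (mem_half κ1 hκ1) _ (mem_half κ2 hκ2))
        rw [sin_half κ1 hκ1, sin_half κ2 hκ2] at this
        linarith
      · right
        have hk2' : 2 ≤ κ2 := by omega
        have ha := (nm_key κ1 κ2 hκ1 hκ2 θ _ _).mp
          (h _ (mem_half κ1 hκ1) _ (mem_half κ2 hκ2))
        have hb := (nm_key κ1 κ2 hκ1 hκ2 θ _ _).mp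
          (h _ (mem_half κ1 hκ1) _ (mem_threehalf κ2 hk2'))
        rw [sin_half κ1 hκ1, sin_half κ2 hκ2] at ha
        rw [sin_half κ1 hκ1, sin_threehalf κ2 (le_trans one_le_two hk2' |>.trans le_rfl)] at hb
        linarith
    · right
      have hk1' : 2 ≤ κ1 := by omega
      have ha := (nm_key κ1 κ2 hκ1 hκ2 θ _ _).mp
        (h _ (mem_half κ1 hκ1) _ (mem_half κ2 hκ2))
      have hb := (nm_key κ1 κ2 hκ1 hκ2 θ _ _).mp
        (h _ (mem_threehalf κ1 hk1') _ (mem_half κ2 hκ2))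
      rw [sin_half κ1 hκ1, sin_half κ2 hκ2] at ha
      rw [sin_threehalf κ1 (le_trans one_le_two hk1' |>.trans le_rfl), sin_half κ2 hκ2] at hb
      linarith
  · rintro (⟨h1, h2, hθ0⟩ | hθ0)
    · subst h1; subst h2
      intro u1 hu1 u2 hu2
      rw [nm_key 1 1 le_rfl le_rfl]
      simp only [Nat.cast_one, one_mul]
      have hs1 : 0 ≤ Real.sin (Real.pi * u1) :=
        Real.sin_nonneg_of_nonneg_of_le_pi (mul_nonneg Real.pi_pos.le hu1.1)
          (by nlinarith [Real.pi_pos, hu1.2])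
      have hs2 : 0 ≤ Real.sin (Real.pi * u2) :=
        Real.sin_nonneg_of_nonneg_of_le_pi (mul_nonneg Real.pi_pos.le hu2.1)
          (by nlinarith [Real.pi_pos, hu2.2])
      exact mul_nonpos_of_nonpos_of_nonneg
        (mul_nonpos_of_nonpos_of_nonneg hθ0 hs1) hs2
    · intro u1 _ u2 _
      rw [nm_key κ1 κ2 hκ1 hκ2, hθ0]
      simp
end

section
/- If κ1 ≥ 2 or κ2 ≥ 2 and θ ≠ 0, then the family of normal mode copulas with mode numbers κ1, κ2 is not ordered in concordance: there exist θᴸ ≤ θᴴ and a point (u1,u2) ∈ [0,1]² with C_NM(u1,u2 | θᴸ) > C_NM(u1,u2 | θᴴ). Conversely, if κ1 = κ2 = 1, then θᴸ ≤ θᴴ implies C_NM(u1,u2 | θᴸ) ≤ C_NM(u1,u2 | θᴴ) for all u1, u2 ∈ [0,1]. -/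
lemma NM_swap (κ1 κ2 : ℕ) (θ u1 u2 : ℝ) : NM κ1 κ2 θ u1 u2 = NM κ2 κ1 θ u2 u1 := by
  unfold NM; ring_nf

lemma aux_counter (κ1 κ2 : ℕ) (h1 : 2 ≤ κ1) (h2 : 1 ≤ κ2) :
    ∃ u1 ∈ Set.Icc (0:ℝ) 1, ∃ u2 ∈ Set.Icc (0:ℝ) 1,
      NM κ1 κ2 1 u1 u2 < NM κ1 κ2 (-1) u1 u2 := by
  have hκ1 : (0:ℝ) < κ1 := by exact_mod_cast Nat.lt_of_lt_of_le (by norm_num) h1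
  have hκ2 : (0:ℝ) < κ2 := by exact_mod_cast h2
  have hπ := Real.pi_pos
  refine ⟨3 / (2 * κ1), ⟨by positivity, ?_⟩, 1 / (2 * κ2), ⟨by positivity, ?_⟩, ?_⟩
  · rw [div_le_one (by positivity)]
    have : (4:ℝ) ≤ 2 * κ1 := by
      have : (2:ℝ) ≤ κ1 := by exact_mod_cast h1
      linarith
    linarith
  · rw [div_le_one (by positivity)]
    have h2' : (1:ℝ) ≤ κ2 := by exact_mod_cast h2
    linarith
  · have e1 : (κ1:ℝ) * Real.pi * (3 / (2 * κ1)) = Real.pi / 2 + Real.pi := by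
      field_simp; ring
    have e2 : (κ2:ℝ) * Real.pi * (1 / (2 * κ2)) = Real.pi / 2 := by
      field_simp
    have s1 : Real.sin ((κ1:ℝ) * Real.pi * (3 / (2 * κ1))) = -1 := by
      rw [e1, Real.sin_add_pi, Real.sin_pi_div_two]
    have s2 : Real.sin ((κ2:ℝ) * Real.pi * (1 / (2 * κ2))) = 1 := by
      rw [e2, Real.sin_pi_div_two]
    unfold NM
    rw [s1, s2]
    have hd : (0:ℝ) < (κ1:ℝ) * κ2 * Real.pi ^ 2 := by positivity
    have hpos : (0:ℝ) < 1 / ((κ1:ℝ) * κ2 * Real.pi ^ 2) := by positivity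
    have hneg : (-1:ℝ) / ((κ1:ℝ) * κ2 * Real.pi ^ 2) = -(1 / ((κ1:ℝ) * κ2 * Real.pi ^ 2)) := by
      ring
    rw [hneg]
    linarith

theorem stmt_9 (κ1 κ2 : ℕ) (hκ1 : 1 ≤ κ1) (hκ2 : 1 ≤ κ2) :
    (∀ θ : ℝ, -1 ≤ θ → θ ≤ 1 → θ ≠ 0 → (2 ≤ κ1 ∨ 2 ≤ κ2) →
      ∃ θL θH : ℝ, -1 ≤ θL ∧ θL ≤ 1 ∧ -1 ≤ θH ∧ θH ≤ 1 ∧ θL ≤ θH ∧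
        ∃ u1 ∈ Set.Icc (0:ℝ) 1, ∃ u2 ∈ Set.Icc (0:ℝ) 1,
          NM κ1 κ2 θH u1 u2 < NM κ1 κ2 θL u1 u2) ∧
    (κ1 = 1 → κ2 = 1 →
      ∀ θL θH : ℝ, -1 ≤ θL → θL ≤ 1 → -1 ≤ θH → θH ≤ 1 → θL ≤ θH →
        ∀ u1 ∈ Set.Icc (0:ℝ) 1, ∀ u2 ∈ Set.Icc (0:ℝ) 1,
          NM κ1 κ2 θL u1 u2 ≤ NM κ1 κ2 θH u1 u2) := by
  constructor
  · rintro θ _ _ _ (h | h)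
    · obtain ⟨u1, hu1, u2, hu2, hlt⟩ := aux_counter κ1 κ2 h hκ2
      exact ⟨-1, 1, by norm_num, by norm_num, by norm_num, by norm_num, by norm_num,
        u1, hu1, u2, hu2, hlt⟩
    · obtain ⟨u2, hu2, u1, hu1, hlt⟩ := aux_counter κ2 κ1 h hκ1
      refine ⟨-1, 1, by norm_num, by norm_num, by norm_num, by norm_num, by norm_num,
        u1, hu1, u2, hu2, ?_⟩
      rw [NM_swap κ1 κ2 1, NM_swap κ1 κ2 (-1)]
      exact hlt
  · rintro rfl rfl θL θH _ _ _ _ hLH u1 hu1 u2 hu2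
    have hπ := Real.pi_pos
    have s1 : 0 ≤ Real.sin ((1:ℕ) * Real.pi * u1) := by
      push_cast; rw [one_mul]
      exact Real.sin_nonneg_of_nonneg_of_le_pi (mul_nonneg hπ.le hu1.1)
        (by nlinarith [hu1.2])
    have s2 : 0 ≤ Real.sin ((1:ℕ) * Real.pi * u2) := by
      push_cast; rw [one_mul]
      exact Real.sin_nonneg_of_nonneg_of_le_pi (mul_nonneg hπ.le hu2.1)
        (by nlinarith [hu2.2])
    unfold NM
    have hd : (0:ℝ) < (1:ℕ) * (1:ℕ) * Real.pi ^ 2 := by push_cast; nlinarith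
    have h' := (div_le_div_iff_of_pos_right hd).mpr hLH
    have hm := mul_le_mul_of_nonneg_right (mul_le_mul_of_nonneg_right h' s1) s2
    linarith
end

section
/- The normal mode copula has zero lower and upper tail dependence: lim_{u→0⁺} C_NM(u,u)/u = 0 and lim_{u→1⁻} (1 - 2u + C_NM(u,u))/(1-u) = 0. -/
/-!
`C_NM(u,u) - u²` is a multiple of `sin(κ₁πu) sin(κ₂πu)`, and each sine vanishes to first order
at `u = 0` and at `u = 1`, since `κπ` is a multiple of `π`. So `C_NM(u,u)` and
`1 - 2u + C_NM(u,u) = (1 - u)² + (C_NM(u,u) - u²)` are `O(v²)` for `v = u`, resp. `v = 1 - u`,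
and their quotients by `v` tend to `0`.
-/

open Real Filter Topology Asymptotics

lemma Real.abs_sin_le_abs_sub_int_mul_pi (x : ℝ) (n : ℤ) : |sin x| ≤ |x - n * π| := by
  calc |sin x| = |sin (x - n * π)| := by simp [sin_sub_int_mul_pi, abs_mul]
    _ ≤ |x - n * π| := abs_sin_le_abs

lemma abs_sin_natCast_mul_pi_mul_le (κ : ℕ) (u : ℝ) (m : ℤ) :
    |sin (κ * π * u)| ≤ κ * π * |u - m| := by
  have h := abs_sin_le_abs_sub_int_mul_pi (κ * π * u) (κ * m)
  rwa [show κ * π * u - ((κ * m : ℤ) : ℝ) * π = κ * π * (u - m) by push_cast; ring, abs_mul,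
    abs_of_nonneg (by positivity : (0 : ℝ) ≤ κ * π)] at h

lemma abs_NM_sub_mul_le (κ1 κ2 : ℕ) (θ u1 u2 v1 v2 : ℝ)
    (h1 : |sin (κ1 * π * u1)| ≤ κ1 * π * |v1|) (h2 : |sin (κ2 * π * u2)| ≤ κ2 * π * |v2|) :
    |NM κ1 κ2 θ u1 u2 - u1 * u2| ≤ |θ| * |v1| * |v2| := by
  set D : ℝ := κ1 * κ2 * π ^ 2
  have hD : 0 ≤ D := by positivity
  calc |NM κ1 κ2 θ u1 u2 - u1 * u2|
      = |θ| * (|sin (κ1 * π * u1)| * |sin (κ2 * π * u2)|) / D := by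
        rw [NM, add_sub_cancel_left, abs_mul, abs_mul, abs_div, abs_of_nonneg hD]; ring
    _ ≤ |θ| * ((κ1 * π * |v1|) * (κ2 * π * |v2|)) / D := by gcongr
    -- `D / D ≤ 1` also covers `D = 0` (some `κᵢ = 0`), where the division is junk
    _ = |θ| * |v1| * |v2| * (D / D) := by ring
    _ ≤ |θ| * |v1| * |v2| := mul_le_of_le_one_right (by positivity) (div_self_le_one D)

lemma tendsto_div_nhds_zero_of_abs_le_mul_sq {α : Type*} {l : Filter α} {f g : α → ℝ} {C : ℝ}
    (hg : Tendsto g l (𝓝 0)) (hf : ∀ᶠ x in l, |f x| ≤ C * g x ^ 2) :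
    Tendsto (fun x => f x / g x) l (𝓝 0) := by
  have hf_sq : f =O[l] fun x => g x * g x :=
    IsBigO.of_bound C (by filter_upwards [hf] with x hx; simpa [sq, abs_mul] using hx)
  have hsq_g : (fun x => g x * g x) =o[l] g := by
    simpa using (isBigO_refl g l).mul_isLittleO (isLittleO_one_iff ℝ |>.2 hg)
  exact (hf_sq.trans_isLittleO hsq_g).tendsto_div_nhds_zero

theorem stmt_10_general (κ1 κ2 : ℕ) (θ : ℝ) :
    Filter.Tendsto (fun u : ℝ => NM κ1 κ2 θ u u / u)
      (nhdsWithin 0 (Set.Ioi 0)) (nhds 0) ∧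
    Filter.Tendsto (fun u : ℝ => (1 - 2 * u + NM κ1 κ2 θ u u) / (1 - u))
      (nhdsWithin 1 (Set.Iio 1)) (nhds 0) := by
  have hNM (u : ℝ) (m : ℤ) := abs_NM_sub_mul_le κ1 κ2 θ u u (u - m) (u - m)
    (abs_sin_natCast_mul_pi_mul_le κ1 u m) (abs_sin_natCast_mul_pi_mul_le κ2 u m)
  constructor
  · refine tendsto_div_nhds_zero_of_abs_le_mul_sq (C := 1 + |θ|)
      (tendsto_nhdsWithin_of_tendsto_nhds tendsto_id) (Eventually.of_forall fun u => ?_)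
    have h := abs_le.1 (hNM u 0)
    simp only [Int.cast_zero, sub_zero, mul_assoc, abs_mul_abs_self] at h
    exact abs_le.2 ⟨by nlinarith [abs_nonneg θ], by nlinarith [abs_nonneg θ]⟩
  · refine tendsto_div_nhds_zero_of_abs_le_mul_sq (C := 1 + |θ|)
      (tendsto_nhdsWithin_of_tendsto_nhds ?_) (Eventually.of_forall fun u => ?_)
    · simpa using (tendsto_id (x := 𝓝 (1 : ℝ))).const_sub 1
    have h := abs_le.1 (hNM u 1)
    simp only [Int.cast_one, mul_assoc, abs_mul_abs_self] at h
    exact abs_le.2 ⟨by nlinarith [abs_nonneg θ], by nlinarith [abs_nonneg θ]⟩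

theorem stmt_10 (κ1 κ2 : ℕ) (hκ1 : 1 ≤ κ1) (hκ2 : 1 ≤ κ2) (θ : ℝ)
    (hθ : -1 ≤ θ ∧ θ ≤ 1) :
    Filter.Tendsto (fun u : ℝ => NM κ1 κ2 θ u u / u)
      (nhdsWithin 0 (Set.Ioi 0)) (nhds 0) ∧
    Filter.Tendsto (fun u : ℝ => (1 - 2 * u + NM κ1 κ2 θ u u) / (1 - u))
      (nhdsWithin 1 (Set.Iio 1)) (nhds 0) :=
  stmt_10_general κ1 κ2 θ
end

section
/- For the normal mode copula, Schweizer and Wolff's σ = 12·∫₀¹∫₀¹ |C_NM(u1,u2) - u1·u2| du1 du2 equals 48·|θ|/(κ1·κ2·π⁴). -/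
open Real intervalIntegral

lemma abs_sin_integral_shift (n : ℕ) :
    ∫ t in (n * π : ℝ)..((n+1) * π), |Real.sin t| = 2 := by
  have h : ∫ t in (n * π : ℝ)..((n+1) * π), |Real.sin t|
      = ∫ s in (0:ℝ)..π, |Real.sin (s + n * π)| := by
    rw [intervalIntegral.integral_comp_add_right (fun t => |Real.sin t|) (n * π)]
    norm_num [add_mul, add_comm]
  rw [h]
  have h2 : ∀ s : ℝ, |Real.sin (s + n * π)| = |Real.sin s| := by
    intro s
    rw [Real.sin_add_nat_mul_pi, abs_mul, abs_pow, abs_neg, abs_one, one_pow, one_mul]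
  simp only [h2]
  have h3 : ∫ s in (0:ℝ)..π, |Real.sin s| = ∫ s in (0:ℝ)..π, Real.sin s := by
    apply intervalIntegral.integral_congr
    intro s hs
    rw [Set.uIcc_of_le Real.pi_pos.le] at hs
    exact abs_of_nonneg (Real.sin_nonneg_of_mem_Icc hs)
  rw [h3, integral_sin]
  norm_num

lemma abs_sin_integral_nat (n : ℕ) :
    ∫ t in (0:ℝ)..(n * π), |Real.sin t| = 2 * n := by
  induction n with
  | zero => simp
  | succ n ih =>
    have hint : ∀ m : ℕ, IntervalIntegrable (fun t => |Real.sin t|) MeasureTheory.volume 0 (m * π) :=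
      fun m => (Real.continuous_sin.abs).intervalIntegrable _ _
    have split : ∫ t in (0:ℝ)..((n+1) * π), |Real.sin t|
        = (∫ t in (0:ℝ)..(n * π), |Real.sin t|) + ∫ t in (n*π:ℝ)..((n+1)*π), |Real.sin t| := by
      rw [intervalIntegral.integral_add_adjacent_intervals (hint n)
        ((Real.continuous_sin.abs).intervalIntegrable _ _)]
    push_cast
    push_cast at split ih
    rw [split, ih, abs_sin_integral_shift]
    ring

lemma abs_sin_integral_unit (k : ℕ) (hk : 1 ≤ k) :
    ∫ u in (0:ℝ)..1, |Real.sin (k * π * u)| = 2 / π := by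
  have hk0 : (k : ℝ) ≠ 0 := Nat.cast_ne_zero.mpr (by omega)
  have hkπ : (k : ℝ) * π ≠ 0 := mul_ne_zero hk0 Real.pi_ne_zero
  rw [intervalIntegral.integral_comp_mul_left (fun t => |Real.sin t|) hkπ]
  rw [mul_zero, mul_one, abs_sin_integral_nat k]
  rw [smul_eq_mul]
  field_simp

theorem stmt_11 (κ1 κ2 : ℕ) (hκ1 : 1 ≤ κ1) (hκ2 : 1 ≤ κ2) (θ : ℝ)
    (hθ : -1 ≤ θ ∧ θ ≤ 1) :
    12 * ∫ u1 in (0:ℝ)..1, ∫ u2 in (0:ℝ)..1, |NM κ1 κ2 θ u1 u2 - u1 * u2|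
      = 48 * |θ| / (κ1 * κ2 * Real.pi ^ 4) := by
  have h1 := abs_sin_integral_unit κ1 hκ1
  have h2 := abs_sin_integral_unit κ2 hκ2
  set c : ℝ := |θ / (κ1 * κ2 * Real.pi ^ 2)| with hc
  have key : ∀ u1 u2 : ℝ, |NM κ1 κ2 θ u1 u2 - u1 * u2|
      = c * |Real.sin (κ1 * π * u1)| * |Real.sin (κ2 * π * u2)| := by
    intro u1 u2
    unfold NM
    rw [add_sub_cancel_left, abs_mul, abs_mul]
  have inner : ∀ u1 : ℝ, (∫ u2 in (0:ℝ)..1, |NM κ1 κ2 θ u1 u2 - u1 * u2|)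
      = c * |Real.sin (κ1 * π * u1)| * (2 / π) := by
    intro u1
    simp only [key]
    rw [intervalIntegral.integral_const_mul, h2]
  simp only [inner]
  rw [intervalIntegral.integral_mul_const, intervalIntegral.integral_const_mul, h1]
  have hκ1' : (0:ℝ) < κ1 := by exact_mod_cast hκ1
  have hκ2' : (0:ℝ) < κ2 := by exact_mod_cast hκ2
  have hD : (0:ℝ) < κ1 * κ2 * Real.pi ^ 2 := by positivity
  rw [hc, abs_div, abs_of_pos hD]
  have hπ := Real.pi_ne_zero
  field_simp
  ring
end

section
/- For the normal mode copula, Spearman's ρ = 12·∫₀¹∫₀¹ (C_NM(u1,u2) - u1·u2) du1 du2 equals 48·θ/(κ1²·κ2²·π⁴) if both κ1 and κ2 are odd, and equals 0 otherwise. -/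
lemma int_sin_aux (c : ℝ) (hc : c ≠ 0) :
    ∫ u in (0:ℝ)..1, Real.sin (c * u) = (1 - Real.cos c) / c := by
  rw [intervalIntegral.integral_comp_mul_left Real.sin hc]
  simp [smul_eq_mul, integral_sin]
  field_simp

lemma cos_nat_pi (n : ℕ) : Real.cos (n * Real.pi) = (-1) ^ n := by
  simpa using Real.cos_nat_mul_pi_sub 0 n

theorem stmt_12 (κ1 κ2 : ℕ) (hκ1 : 1 ≤ κ1) (hκ2 : 1 ≤ κ2) (θ : ℝ)
    (hθ : -1 ≤ θ ∧ θ ≤ 1) :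
    12 * ∫ u1 in (0:ℝ)..1, ∫ u2 in (0:ℝ)..1, (NM κ1 κ2 θ u1 u2 - u1 * u2)
      = if Odd κ1 ∧ Odd κ2 then 48 * θ / ((κ1:ℝ) ^ 2 * (κ2:ℝ) ^ 2 * Real.pi ^ 4)
        else 0 := by
  have hπ : Real.pi ≠ 0 := Real.pi_ne_zero
  have hk1 : (κ1:ℝ) ≠ 0 := Nat.cast_ne_zero.mpr (by omega)
  have hk2 : (κ2:ℝ) ≠ 0 := Nat.cast_ne_zero.mpr (by omega)
  have hc1 : (κ1:ℝ) * Real.pi ≠ 0 := mul_ne_zero hk1 hπ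
  have hc2 : (κ2:ℝ) * Real.pi ≠ 0 := mul_ne_zero hk2 hπ
  simp only [NM, add_sub_cancel_left]
  have hin : ∀ u1 : ℝ,
      (∫ u2 in (0:ℝ)..1, θ / (κ1 * κ2 * Real.pi ^ 2) * Real.sin (κ1 * Real.pi * u1)
        * Real.sin (κ2 * Real.pi * u2))
      = θ / (κ1 * κ2 * Real.pi ^ 2) * Real.sin (κ1 * Real.pi * u1)
        * ((1 - Real.cos (κ2 * Real.pi)) / (κ2 * Real.pi)) := by
    intro u1
    rw [intervalIntegral.integral_const_mul, int_sin_aux _ hc2]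
  simp only [hin]
  have hout :
      (∫ u1 in (0:ℝ)..1, θ / (κ1 * κ2 * Real.pi ^ 2) * Real.sin (κ1 * Real.pi * u1)
        * ((1 - Real.cos (κ2 * Real.pi)) / (κ2 * Real.pi)))
      = θ / (κ1 * κ2 * Real.pi ^ 2) * ((1 - Real.cos (κ1 * Real.pi)) / (κ1 * Real.pi))
        * ((1 - Real.cos (κ2 * Real.pi)) / (κ2 * Real.pi)) := by
    rw [intervalIntegral.integral_mul_const, intervalIntegral.integral_const_mul,
      int_sin_aux _ hc1]
  rw [hout, cos_nat_pi, cos_nat_pi]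
  by_cases h1 : Odd κ1
  · by_cases h2 : Odd κ2
    · rw [if_pos ⟨h1, h2⟩, h1.neg_one_pow, h2.neg_one_pow]
      field_simp
      ring
    · rw [if_neg (by tauto), (Nat.not_odd_iff_even.mp h2).neg_one_pow]
      ring
  · rw [if_neg (by tauto), (Nat.not_odd_iff_even.mp h1).neg_one_pow]
    ring
end

section
/- For the normal mode copula, Kendall's τ = 1 - 4·∫₀¹∫₀¹ (∂C_NM/∂u1)·(∂C_NM/∂u2) du1 du2 equals 32·θ/(κ1²·κ2²·π⁴) if both κ1 and κ2 are odd, and equals 0 otherwise. -/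
open Real intervalIntegral

theorem integral_integral_sum_mul {ι : Type*} (s : Finset ι) (f g : ι → ℝ → ℝ) {a b c d : ℝ}
    (hf : ∀ i ∈ s, IntervalIntegrable (f i) MeasureTheory.volume a b)
    (hg : ∀ i ∈ s, IntervalIntegrable (g i) MeasureTheory.volume c d) :
    ∫ x in a..b, ∫ y in c..d, ∑ i ∈ s, f i x * g i y
      = ∑ i ∈ s, (∫ x in a..b, f i x) * ∫ y in c..d, g i y := by
  have inner (x : ℝ) :
      ∫ y in c..d, ∑ i ∈ s, f i x * g i y = ∑ i ∈ s, f i x * ∫ y in c..d, g i y := by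
    rw [integral_finsetSum fun i hi => (hg i hi).const_mul _]
    simp only [integral_const_mul]
  simp only [inner]
  rw [integral_finsetSum fun i hi => (hf i hi).mul_const _]
  simp only [integral_mul_const]

theorem integral_sin_mul (c : ℝ) : ∫ x in (0:ℝ)..1, sin (c * x) = (1 - cos c) / c := by
  rcases eq_or_ne c 0 with rfl | hc
  · simp
  rw [integral_comp_mul_left (fun x => sin x) hc, integral_sin]
  simp [div_eq_inv_mul]

theorem integral_sin_mul_mul_cos_mul (c : ℝ) :
    ∫ x in (0:ℝ)..1, sin (c * x) * cos (c * x) = sin c ^ 2 / (2 * c) := by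
  rcases eq_or_ne c 0 with rfl | hc
  · simp
  rw [integral_comp_mul_left (fun x => sin x * cos x) hc, integral_sin_mul_cos₁]
  simp only [mul_one, mul_zero, sin_zero, ne_eq, OfNat.ofNat_ne_zero, not_false_eq_true, zero_pow,
    sub_zero, smul_eq_mul]
  field_simp

theorem integral_mul_cos_mul {c : ℝ} (hc : c ≠ 0) :
    ∫ x in (0:ℝ)..1, x * cos (c * x) = sin c / c + (cos c - 1) / c ^ 2 := by
  have antideriv (x : ℝ) : HasDerivAt (fun x => x * sin (c * x) / c + cos (c * x) / c ^ 2)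
      (x * cos (c * x)) x := by
    have hlin : HasDerivAt (fun x => c * x) c x := by simpa using (hasDerivAt_id x).const_mul c
    refine ((((hasDerivAt_id' x).mul hlin.sin).div_const c).add
      (hlin.cos.div_const (c ^ 2))).congr_deriv ?_
    field_simp
    ring
  rw [integral_eq_sub_of_hasDerivAt (fun x _ => antideriv x)
    ((by fun_prop : Continuous fun x : ℝ => x * cos (c * x)).intervalIntegrable 0 1)]
  simp only [one_mul, mul_one, mul_zero, sin_zero, cos_zero, zero_div, zero_add]
  ring

theorem one_sub_neg_one_pow_mul_one_sub_neg_one_pow (m n : ℕ) :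
    (1 - (-1 : ℝ) ^ m) * (1 - (-1) ^ n) = if Odd m ∧ Odd n then 4 else 0 := by
  rcases Nat.even_or_odd m with hm | hm <;> rcases Nat.even_or_odd n with hn | hn <;>
    norm_num [hm.neg_one_pow, hn.neg_one_pow, Nat.not_odd_iff_even.2, hm, hn]

section NM

variable (κ1 κ2 : ℕ) (θ u1 u2 : ℝ)

theorem deriv_NM_fst : deriv (fun v => NM κ1 κ2 θ v u2) u1
    = u2 + θ / (κ1 * κ2 * π ^ 2) * (κ1 * π) * cos (κ1 * π * u1) * sin (κ2 * π * u2) := by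
  have hlin : HasDerivAt (fun x => κ1 * π * x) (κ1 * π) u1 := by
    simpa using (hasDerivAt_id u1).const_mul (κ1 * π)
  refine (((hasDerivAt_id' u1).mul_const u2).add
    ((hlin.sin.const_mul _).mul_const _)).deriv.trans ?_
  ring

theorem deriv_NM_snd : deriv (fun v => NM κ1 κ2 θ u1 v) u2
    = u1 + θ / (κ1 * κ2 * π ^ 2) * (κ2 * π) * sin (κ1 * π * u1) * cos (κ2 * π * u2) := by
  have hlin : HasDerivAt (fun x => κ2 * π * x) (κ2 * π) u2 := by
    simpa using (hasDerivAt_id u2).const_mul (κ2 * π)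
  refine (((hasDerivAt_id' u2).const_mul u1).add (hlin.sin.const_mul _)).deriv.trans ?_
  ring

end NM

theorem stmt_13_general (κ1 κ2 : ℕ) (hκ1 : 1 ≤ κ1) (hκ2 : 1 ≤ κ2) (θ : ℝ) :
    1 - 4 * ∫ u1 in (0:ℝ)..1, ∫ u2 in (0:ℝ)..1,
        (deriv (fun v => NM κ1 κ2 θ v u2) u1) * (deriv (fun v => NM κ1 κ2 θ u1 v) u2)
      = if Odd κ1 ∧ Odd κ2 then 32 * θ / ((κ1:ℝ) ^ 2 * (κ2:ℝ) ^ 2 * Real.pi ^ 4)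
        else 0 := by
  set a : ℝ := κ1 * π
  set b : ℝ := κ2 * π
  set D : ℝ := θ / (κ1 * κ2 * π ^ 2)
  have ha : a ≠ 0 := mul_ne_zero (Nat.cast_ne_zero.2 (by omega)) pi_ne_zero
  have hb : b ≠ 0 := mul_ne_zero (Nat.cast_ne_zero.2 (by omega)) pi_ne_zero
  have separated (u1 u2 : ℝ) :
      deriv (fun v => NM κ1 κ2 θ v u2) u1 * deriv (fun v => NM κ1 κ2 θ u1 v) u2
        = ∑ i : Fin 4,
          ![fun x => x, fun x => sin (a * x), fun x => D * a * (x * cos (a * x)),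
            fun x => D ^ 2 * a * b * (sin (a * x) * cos (a * x))] i u1 *
          ![fun y => y, fun y => D * b * (y * cos (b * y)), fun y => sin (b * y),
            fun y => sin (b * y) * cos (b * y)] i u2 := by
    simp only [deriv_NM_fst, deriv_NM_snd, Fin.sum_univ_four, Matrix.cons_val_zero,
      Matrix.cons_val_one, Matrix.cons_val]
    ring
  simp only [separated]
  rw [integral_integral_sum_mul]
  · simp only [Fin.sum_univ_four, Matrix.cons_val_zero, Matrix.cons_val_one, Matrix.cons_val,
      integral_id, integral_const_mul, integral_sin_mul, integral_sin_mul_mul_cos_mul,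
      integral_mul_cos_mul ha, integral_mul_cos_mul hb]
    rw [sin_nat_mul_pi κ1, sin_nat_mul_pi κ2, cos_nat_mul_pi κ1, cos_nat_mul_pi κ2]
    calc _ = 8 * θ / ((κ1:ℝ) ^ 2 * κ2 ^ 2 * π ^ 4) * ((1 - (-1) ^ κ1) * (1 - (-1) ^ κ2)) := by
          simp only [D, a, b]
          field_simp
          ring
      _ = _ := by
          rw [one_sub_neg_one_pow_mul_one_sub_neg_one_pow]
          split_ifs <;> ring
  all_goals
    refine fun i _ => Continuous.intervalIntegrable ?_ _ _
    fin_cases i <;> simp only [Fin.reduceFinMk, Fin.zero_eta, Fin.mk_one, Matrix.cons_val_zero,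
      Matrix.cons_val_one, Matrix.cons_val] <;> fun_prop

theorem stmt_13 (κ1 κ2 : ℕ) (hκ1 : 1 ≤ κ1) (hκ2 : 1 ≤ κ2) (θ : ℝ)
    (hθ : -1 ≤ θ ∧ θ ≤ 1) :
    1 - 4 * ∫ u1 in (0:ℝ)..1, ∫ u2 in (0:ℝ)..1,
        (deriv (fun v => NM κ1 κ2 θ v u2) u1) * (deriv (fun v => NM κ1 κ2 θ u1 v) u2)
      = if Odd κ1 ∧ Odd κ2 then 32 * θ / ((κ1:ℝ) ^ 2 * (κ2:ℝ) ^ 2 * Real.pi ^ 4)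
        else 0 :=
  stmt_13_general κ1 κ2 hκ1 hκ2 θ
end

section
/- There exist no θ ∈ [-1,1] and positive integers κ1, κ2 such that the normal mode copula C_NM equals either the Fréchet lower bound copula C_L(u1,u2) = max(u1+u2-1, 0) or the Fréchet upper bound copula C_H(u1,u2) = min(u1,u2) on all of [0,1]². -/
theorem stmt_18 :
    ¬ ∃ (θ : ℝ) (κ1 κ2 : ℕ), -1 ≤ θ ∧ θ ≤ 1 ∧ 1 ≤ κ1 ∧ 1 ≤ κ2 ∧
      ((∀ u1 ∈ Set.Icc (0:ℝ) 1, ∀ u2 ∈ Set.Icc (0:ℝ) 1,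
          NM κ1 κ2 θ u1 u2 = max (u1 + u2 - 1) 0) ∨
       (∀ u1 ∈ Set.Icc (0:ℝ) 1, ∀ u2 ∈ Set.Icc (0:ℝ) 1,
          NM κ1 κ2 θ u1 u2 = min u1 u2)) := by
  rintro ⟨θ, κ1, κ2, hθ1, hθ2, hκ1, hκ2, h⟩
  have hπ := Real.pi_gt_three
  have h1 : (1:ℝ) ≤ (κ1:ℝ) := by exact_mod_cast hκ1
  have h2 : (1:ℝ) ≤ (κ2:ℝ) := by exact_mod_cast hκ2
  have hp2 : (0:ℝ) < Real.pi ^ 2 := by positivity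
  set E : ℝ := θ / (κ1 * κ2 * Real.pi ^ 2) * Real.sin (κ1 * Real.pi * (1/2)) *
      Real.sin (κ2 * Real.pi * (1/2)) with hE
  have habs : |E| ≤ 1 / Real.pi ^ 2 := by
    rw [hE, abs_mul, abs_mul, abs_div]
    have hden : Real.pi ^ 2 ≤ |(κ1:ℝ) * κ2 * Real.pi ^ 2| := by
      have hk1 : (0:ℝ) < κ1 := by linarith
      have hk2 : (0:ℝ) < κ2 := by linarith
      rw [abs_of_pos (by positivity)]
      nlinarith [mul_le_mul h1 h2 (by linarith) (by linarith)]
    have hθ : |θ| ≤ 1 := abs_le.2 ⟨hθ1, hθ2⟩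
    have hs1 := Real.abs_sin_le_one (κ1 * Real.pi * (1/2))
    have hs2 := Real.abs_sin_le_one (κ2 * Real.pi * (1/2))
    calc |θ| / |(κ1:ℝ) * κ2 * Real.pi ^ 2| * |Real.sin (κ1 * Real.pi * (1/2))| *
          |Real.sin (κ2 * Real.pi * (1/2))|
        ≤ 1 / Real.pi ^ 2 * 1 * 1 := by
          gcongr
      _ = 1 / Real.pi ^ 2 := by ring
  have hmem : (1/2 : ℝ) ∈ Set.Icc (0:ℝ) 1 := by norm_num
  have hsmall : 1 / Real.pi ^ 2 < 1/4 := by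
    rw [div_lt_iff₀ hp2]; nlinarith
  rcases h with h | h
  · have := h (1/2) hmem (1/2) hmem
    rw [NM] at this
    have hmax : max ((1:ℝ)/2 + 1/2 - 1) 0 = 0 := by norm_num
    rw [hmax] at this
    have : E = -(1/4) := by rw [hE]; linarith [this]
    rw [this] at habs
    rw [abs_neg, abs_of_pos (by norm_num : (0:ℝ) < 1/4)] at habs
    linarith
  · have := h (1/2) hmem (1/2) hmem
    rw [NM] at this
    have hmin : min ((1:ℝ)/2) (1/2) = 1/2 := by norm_num
    rw [hmin] at this
    have : E = 1/4 := by rw [hE]; linarith [this]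
    rw [this] at habs
    rw [abs_of_pos (by norm_num : (0:ℝ) < 1/4)] at habs
    linarith
end

section
/- Suppose κ1 mod 4 = κ2 mod 4 = 1 or κ1 mod 4 = κ2 mod 4 = 3, θ ≥ 0, and θ_FGM ≥ (1/4)·|θ|·κ1·κ2·π². Then C_NM(u1,u2 | θ) ≤ C_FGM(u1,u2 | θ_FGM) for all u1, u2 ∈ [0,1]. -/
noncomputable def FGM (θFGM u1 u2 : ℝ) : ℝ :=
  u1 * u2 + θFGM * u1 * (1 - u1) * u2 * (1 - u2)

lemma aux_sin_nat (n : ℕ) (x : ℝ) : |Real.sin (n * x)| ≤ n * |Real.sin x| := by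
  induction n with
  | zero => simp
  | succ n ih =>
    have h : ((n : ℝ) + 1) * x = n * x + x := by ring
    push_cast
    rw [h, Real.sin_add]
    calc |Real.sin (n * x) * Real.cos x + Real.cos (n * x) * Real.sin x|
        ≤ |Real.sin (n * x) * Real.cos x| + |Real.cos (n * x) * Real.sin x| := abs_add_le _ _
      _ ≤ |Real.sin (n * x)| * 1 + 1 * |Real.sin x| := by
          rw [abs_mul, abs_mul]
          gcongr
          · exact Real.abs_cos_le_one x
          · exact Real.abs_cos_le_one _
      _ ≤ (n : ℝ) * |Real.sin x| + 1 * |Real.sin x| := by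
          have := ih
          nlinarith [abs_nonneg (Real.sin x)]
      _ = ((n : ℝ) + 1) * |Real.sin x| := by ring

lemma aux_sin_quad (u : ℝ) (h0 : 0 ≤ u) (h1 : u ≤ 1) :
    Real.sin (Real.pi * u) ≤ Real.pi ^ 2 / 2 * (u * (1 - u)) := by
  have hπ := Real.pi_pos
  have hx : Real.pi * u = 2 * (Real.pi * u / 2) := by ring
  rw [hx, Real.sin_two_mul]
  have hs0 : 0 ≤ Real.sin (Real.pi * u / 2) := by
    apply Real.sin_nonneg_of_nonneg_of_le_pi
    · positivity
    · nlinarith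
  have hc0 : 0 ≤ Real.cos (Real.pi * u / 2) := by
    apply Real.cos_nonneg_of_mem_Icc
    constructor <;> nlinarith
  have hs : Real.sin (Real.pi * u / 2) ≤ Real.pi * u / 2 :=
    Real.sin_le (by positivity)
  have hc : Real.cos (Real.pi * u / 2) ≤ Real.pi * (1 - u) / 2 := by
    have : Real.cos (Real.pi * u / 2) = Real.sin (Real.pi / 2 - Real.pi * u / 2) := by
      rw [Real.sin_pi_div_two_sub]
    rw [this]
    have h2 : Real.pi / 2 - Real.pi * u / 2 = Real.pi * (1 - u) / 2 := by ring
    rw [h2]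
    exact Real.sin_le (by nlinarith)
  nlinarith [mul_le_mul hs hc hc0 (by positivity : (0:ℝ) ≤ Real.pi * u / 2)]

set_option maxHeartbeats 1000000 in
theorem stmt_19 (κ1 κ2 : ℕ) (hκ1 : 1 ≤ κ1) (hκ2 : 1 ≤ κ2) (θ θFGM : ℝ)
    (hθ : -1 ≤ θ ∧ θ ≤ 1) (hθF : -1 ≤ θFGM ∧ θFGM ≤ 1)
    (hmod : (κ1 % 4 = 1 ∧ κ2 % 4 = 1) ∨ (κ1 % 4 = 3 ∧ κ2 % 4 = 3))
    (hθpos : 0 ≤ θ)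
    (hbig : (1/4) * |θ| * κ1 * κ2 * Real.pi ^ 2 ≤ θFGM) :
    ∀ u1 ∈ Set.Icc (0:ℝ) 1, ∀ u2 ∈ Set.Icc (0:ℝ) 1,
      NM κ1 κ2 θ u1 u2 ≤ FGM θFGM u1 u2 := by
  rintro u1 ⟨h10, h11⟩ u2 ⟨h20, h21⟩
  have hπ := Real.pi_pos
  have k1 : (1:ℝ) ≤ κ1 := by exact_mod_cast hκ1
  have k2 : (1:ℝ) ≤ κ2 := by exact_mod_cast hκ2
  have hden : (0:ℝ) < κ1 * κ2 * Real.pi ^ 2 := by positivity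
  have hc : 0 ≤ θ / (κ1 * κ2 * Real.pi ^ 2) := div_nonneg hθpos hden.le
  -- rewrite the sine arguments
  have e1 : (κ1 : ℝ) * Real.pi * u1 = κ1 * (Real.pi * u1) := by ring
  have e2 : (κ2 : ℝ) * Real.pi * u2 = κ2 * (Real.pi * u2) := by ring
  set s1 := Real.sin ((κ1 : ℝ) * Real.pi * u1) with hs1def
  set s2 := Real.sin ((κ2 : ℝ) * Real.pi * u2) with hs2def
  have sp1 : 0 ≤ Real.sin (Real.pi * u1) :=
    Real.sin_nonneg_of_nonneg_of_le_pi (by positivity) (by nlinarith)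
  have sp2 : 0 ≤ Real.sin (Real.pi * u2) :=
    Real.sin_nonneg_of_nonneg_of_le_pi (by positivity) (by nlinarith)
  have ha1 : |s1| ≤ κ1 * Real.sin (Real.pi * u1) := by
    rw [hs1def, e1]
    calc |Real.sin ((κ1:ℝ) * (Real.pi * u1))| ≤ κ1 * |Real.sin (Real.pi * u1)| :=
          aux_sin_nat κ1 (Real.pi * u1)
      _ = κ1 * Real.sin (Real.pi * u1) := by rw [abs_of_nonneg sp1]
  have ha2 : |s2| ≤ κ2 * Real.sin (Real.pi * u2) := by
    rw [hs2def, e2]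
    calc |Real.sin ((κ2:ℝ) * (Real.pi * u2))| ≤ κ2 * |Real.sin (Real.pi * u2)| :=
          aux_sin_nat κ2 (Real.pi * u2)
      _ = κ2 * Real.sin (Real.pi * u2) := by rw [abs_of_nonneg sp2]
  have sb1 := aux_sin_quad u1 h10 h11
  have sb2 := aux_sin_quad u2 h20 h21
  have hP1 : 0 ≤ u1 * (1 - u1) := by nlinarith
  have hP2 : 0 ≤ u2 * (1 - u2) := by nlinarith
  -- key inequality
  have key : θ / (κ1 * κ2 * Real.pi ^ 2) * s1 * s2 ≤
      θFGM * u1 * (1 - u1) * u2 * (1 - u2) := by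
    have habs : |θ| = θ := abs_of_nonneg hθpos
    rw [habs] at hbig
    have step1 : s1 * s2 ≤ (κ1 * Real.sin (Real.pi * u1)) * (κ2 * Real.sin (Real.pi * u2)) := by
      calc s1 * s2 ≤ |s1 * s2| := le_abs_self _
        _ = |s1| * |s2| := abs_mul _ _
        _ ≤ (κ1 * Real.sin (Real.pi * u1)) * (κ2 * Real.sin (Real.pi * u2)) :=
            mul_le_mul ha1 ha2 (abs_nonneg _) (by positivity)
    calc θ / (κ1 * κ2 * Real.pi ^ 2) * s1 * s2
        = θ / (κ1 * κ2 * Real.pi ^ 2) * (s1 * s2) := by ring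
      _ ≤ θ / (κ1 * κ2 * Real.pi ^ 2) *
            ((κ1 * Real.sin (Real.pi * u1)) * (κ2 * Real.sin (Real.pi * u2))) :=
          mul_le_mul_of_nonneg_left step1 hc
      _ = θ / Real.pi ^ 2 * (Real.sin (Real.pi * u1) * Real.sin (Real.pi * u2)) := by
          field_simp
      _ ≤ θ / Real.pi ^ 2 *
            ((Real.pi ^ 2 / 2 * (u1 * (1 - u1))) * (Real.pi ^ 2 / 2 * (u2 * (1 - u2)))) := by
          apply mul_le_mul_of_nonneg_left _ (by positivity)
          exact mul_le_mul sb1 sb2 sp2 (by positivity)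
      _ = θ * Real.pi ^ 2 / 4 * ((u1 * (1 - u1)) * (u2 * (1 - u2))) := by
          field_simp
          ring
      _ ≤ θFGM * u1 * (1 - u1) * u2 * (1 - u2) := by
          have hk : (1:ℝ) ≤ (κ1:ℝ) * κ2 := by nlinarith
          have hcoef : θ * Real.pi ^ 2 / 4 ≤ θFGM := by
            nlinarith [mul_nonneg hθpos (sq_nonneg Real.pi)]
          nlinarith [mul_le_mul_of_nonneg_right hcoef (mul_nonneg hP1 hP2)]
  unfold NM FGM
  nlinarith [key]
end
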